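/- Let A = QΛQᵀ be symmetric with eigenvalues λ₁,…,λₙ, and let v be uniformly distributed on the unit sphere in ℝⁿ. Then E[(vᵀ f(A) v)²] = (2/(n(n+2)))·Σᵢ f(λᵢ)² + (1/(n(n+2)))·(Σᵢ f(λᵢ))². -/

import Mathlib

/-!
Conjugating by `Qᵀ`, which preserves the law of `v`, turns the quadratic form into
`∑ᵢ f(λᵢ) vᵢ²`, so everything reduces to the fourth moments `E[vᵢ² vⱼ²]`. A coordinate swap
shows that all `E[vᵢ⁴]` agree, and the rotation by `π/4` in the `(i, j)`-plane, which maps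
`xᵢ⁴ + xⱼ⁴` to `(xᵢ⁴ + xⱼ⁴)/2 + 3 xᵢ² xⱼ²`, gives `E[vᵢ² vⱼ²] = E[vᵢ⁴]/3` for `i ≠ j`.
Taking all weights equal to `1`, the identity `(∑ vᵢ²)² = 1` forces `E[vᵢ⁴] = 3/(n(n+2))`.
-/

open MeasureTheory Matrix

section Givens

variable {n : Type*} [Fintype n] [DecidableEq n]

def givens (i j : n) (c s : ℝ) : Matrix n n ℝ :=
  1 + (c - 1) • single i i 1 + (c - 1) • single j j 1 + s • single i j 1 + (-s) • single j i 1

variable {i j : n}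

lemma givens_transpose_mul_self (hij : i ≠ j) {c s : ℝ} (h : c ^ 2 + s ^ 2 = 1) :
    (givens i j c s)ᵀ * givens i j c s = 1 := by
  simp only [givens, transpose_add, transpose_smul, transpose_one, transpose_single,
    Matrix.add_mul, Matrix.mul_add, Matrix.smul_mul, Matrix.mul_smul, Matrix.one_mul,
    single_mul_single_same, single_mul_single_of_ne _ _ _ _ hij,
    single_mul_single_of_ne _ _ _ _ hij.symm, smul_zero, mul_one]
  match_scalars <;> first | ring1 | linear_combination h

lemma givens_mulVec_left (hij : i ≠ j) (c s : ℝ) (x : n → ℝ) :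
    (givens i j c s *ᵥ x) i = c * x i + s * x j := by
  simp only [givens, smul_single, smul_eq_mul, mul_one, neg_smul, add_mulVec, one_mulVec,
    single_mulVec, neg_mulVec, Pi.add_apply, Function.update_self, ne_eq, hij, not_false_eq_true,
    Function.update_of_ne, Pi.zero_apply, add_zero, Pi.neg_apply, neg_zero]
  ring

lemma givens_mulVec_right (hij : i ≠ j) (c s : ℝ) (x : n → ℝ) :
    (givens i j c s *ᵥ x) j = -s * x i + c * x j := by
  simp only [givens, smul_single, smul_eq_mul, mul_one, neg_smul, add_mulVec, one_mulVec,
    single_mulVec, neg_mulVec, Pi.add_apply, ne_eq, hij.symm, not_false_eq_true,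
    Function.update_of_ne, Pi.zero_apply, add_zero, Function.update_self, Pi.neg_apply]
  ring

end Givens

lemma dotProduct_mulVec_conj_diagonal {R n : Type*} [CommRing R] [Fintype n] [DecidableEq n]
    (Q : Matrix n n R) (d : n → R) (x : n → R) :
    x ⬝ᵥ (Q * diagonal d * Qᵀ) *ᵥ x = ∑ i, d i * (Qᵀ *ᵥ x) i ^ 2 := by
  rw [← mulVec_mulVec, ← mulVec_mulVec, dotProduct_mulVec, ← mulVec_transpose]
  simp only [dotProduct, mulVec_diagonal]
  exact Finset.sum_congr rfl fun i _ => by ring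

lemma integrable_comp_of_norm_le {Ω E : Type*} [MeasurableSpace Ω] {μ : Measure Ω}
    [IsFiniteMeasure μ] [NormedAddCommGroup E] [ProperSpace E] [MeasurableSpace E]
    [OpensMeasurableSpace E] {v : Ω → E} (hv : Measurable v) {C : ℝ} (hC : ∀ ω, ‖v ω‖ ≤ C)
    {g : E → ℝ} (hg : Continuous g) : Integrable (fun ω => g (v ω)) μ := by
  obtain ⟨B, hB⟩ := (isCompact_closedBall (0 : E) C).exists_bound_of_continuousOn hg.continuousOn
  exact .of_bound (hg.measurable.comp hv).aestronglyMeasurable B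
    (ae_of_all _ fun ω => hB _ (mem_closedBall_zero_iff.mpr (hC ω)))

lemma norm_le_one_of_sum_sq_eq_one {n : Type*} [Fintype n] {x : n → ℝ}
    (hx : ∑ i, x i ^ 2 = 1) : ‖x‖ ≤ 1 := by
  refine (pi_norm_le_iff_of_nonneg zero_le_one).mpr fun i => ?_
  rw [Real.norm_eq_abs, ← sq_le_one_iff_abs_le_one, ← hx]
  exact Finset.single_le_sum (fun j _ => sq_nonneg (x j)) (Finset.mem_univ i)

lemma sum_sum_mul_mul_ite {R n : Type*} [CommRing R] [Fintype n] [DecidableEq n]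
    (c : n → R) (a b : R) :
    ∑ i, ∑ j, c i * c j * (if i = j then a else b)
      = b * (∑ i, c i) ^ 2 + (a - b) * ∑ i, c i ^ 2 := by
  have hsplit : ∀ i j, c i * c j * (if i = j then a else b)
      = b * (c i * c j) + (a - b) * (if i = j then c i ^ 2 else 0) := fun i j => by
    split_ifs with h
    · subst h; ring
    · ring
  simp only [hsplit, Finset.sum_add_distrib, ← Finset.mul_sum, Finset.sum_ite_eq,
    Finset.mem_univ, if_true, ← Finset.sum_mul]
  ring

section FourthMoments

variable {Ω n : Type*} [MeasurableSpace Ω] [Fintype n] {μ : Measure Ω} {v : Ω → n → ℝ}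

noncomputable def fourthMoment (μ : Measure Ω) (v : Ω → n → ℝ) (i j : n) : ℝ :=
  ∫ ω, v ω i ^ 2 * v ω j ^ 2 ∂μ

lemma integrable_sq_mul_sq [IsFiniteMeasure μ] (hv : Measurable v)
    (hnorm : ∀ ω, ∑ i, v ω i ^ 2 = 1) (i j : n) :
    Integrable (fun ω => v ω i ^ 2 * v ω j ^ 2) μ :=
  integrable_comp_of_norm_le hv (fun ω => norm_le_one_of_sum_sq_eq_one (hnorm ω))
    (g := fun x => x i ^ 2 * x j ^ 2) (by fun_prop)

lemma integral_sq_weighted_sum_sq [IsFiniteMeasure μ] (hv : Measurable v)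
    (hnorm : ∀ ω, ∑ i, v ω i ^ 2 = 1) (c : n → ℝ) :
    ∫ ω, (∑ i, c i * v ω i ^ 2) ^ 2 ∂μ = ∑ i, ∑ j, c i * c j * fourthMoment μ v i j := by
  have hint := integrable_sq_mul_sq (μ := μ) hv hnorm
  have hexpand : ∀ ω, (∑ i, c i * v ω i ^ 2) ^ 2
      = ∑ i, ∑ j, c i * c j * (v ω i ^ 2 * v ω j ^ 2) := fun ω => by
    rw [sq, Finset.sum_mul_sum]
    exact Finset.sum_congr rfl fun i _ => Finset.sum_congr rfl fun j _ => by ring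
  simp only [hexpand, fourthMoment]
  rw [integral_finsetSum _ fun i _ => integrable_finsetSum _ fun j _ => (hint i j).const_mul _]
  refine Finset.sum_congr rfl fun i _ => ?_
  rw [integral_finsetSum _ fun j _ => (hint i j).const_mul _]
  exact Finset.sum_congr rfl fun j _ => integral_const_mul _ _

variable [DecidableEq n]

def IsOrthogonallyInvariant (μ : Measure Ω) (v : Ω → n → ℝ) : Prop :=
  ∀ R : Matrix n n ℝ, Rᵀ * R = 1 → μ.map (fun ω => R *ᵥ v ω) = μ.map v

lemma IsOrthogonallyInvariant.integral_comp_mulVec (hrot : IsOrthogonallyInvariant μ v)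
    (hv : Measurable v) {R : Matrix n n ℝ} (hR : Rᵀ * R = 1) {g : (n → ℝ) → ℝ}
    (hg : Measurable g) : ∫ ω, g (R *ᵥ v ω) ∂μ = ∫ ω, g (v ω) ∂μ := by
  have hRv : Measurable fun ω => R *ᵥ v ω :=
    R.mulVecLin.continuous_of_finiteDimensional.measurable.comp hv
  rw [← integral_map hRv.aemeasurable hg.aestronglyMeasurable, hrot R hR,
    integral_map hv.aemeasurable hg.aestronglyMeasurable]

lemma fourthMoment_self_eq (hv : Measurable v)
    (hrot : IsOrthogonallyInvariant μ v) (i j : n) :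
    fourthMoment μ v i i = fourthMoment μ v j j := by
  rcases eq_or_ne i j with rfl | hij
  · rfl
  have hswap := hrot.integral_comp_mulVec hv (givens_transpose_mul_self hij
    (c := 0) (s := 1) (by norm_num)) (g := fun x => x i ^ 2 * x i ^ 2) (by fun_prop)
  simp only [givens_mulVec_left hij, zero_mul, one_mul, zero_add] at hswap
  exact hswap.symm

lemma fourthMoment_of_ne [IsFiniteMeasure μ] (hv : Measurable v)
    (hrot : IsOrthogonallyInvariant μ v)
    (hnorm : ∀ ω, ∑ i, v ω i ^ 2 = 1) {i j : n} (hij : i ≠ j) :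
    fourthMoment μ v i j = fourthMoment μ v i i / 3 := by
  set r := √(1 / 2)
  have hr : r ^ 2 = 1 / 2 := Real.sq_sqrt (by norm_num)
  have hrotate := hrot.integral_comp_mulVec hv (givens_transpose_mul_self hij
    (c := r) (s := r) (by rw [hr]; norm_num))
    (g := fun x => x i ^ 2 * x i ^ 2 + x j ^ 2 * x j ^ 2) (by fun_prop)
  simp only [givens_mulVec_left hij, givens_mulVec_right hij] at hrotate
  have hexpand : ∀ x : n → ℝ, (r * x i + r * x j) ^ 2 * (r * x i + r * x j) ^ 2
      + (-r * x i + r * x j) ^ 2 * (-r * x i + r * x j) ^ 2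
      = (x i ^ 2 * x i ^ 2 + x j ^ 2 * x j ^ 2) / 2 + 3 * (x i ^ 2 * x j ^ 2) := fun x => by
    linear_combination (2 * (r ^ 2 + 1 / 2) * (x i ^ 4 + 6 * x i ^ 2 * x j ^ 2 + x j ^ 4)) * hr
  have hint := integrable_sq_mul_sq (μ := μ) hv hnorm
  simp only [hexpand] at hrotate
  rw [integral_add (by exact ((hint i i).add (hint j j)).div_const 2) ((hint i j).const_mul 3),
    integral_div, integral_const_mul, integral_add (hint i i) (hint j j)] at hrotate
  have hii := fourthMoment_self_eq hv hrot i j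
  simp only [fourthMoment] at hii ⊢
  linarith

lemma fourthMoment_eq_ite [IsFiniteMeasure μ] (hv : Measurable v)
    (hrot : IsOrthogonallyInvariant μ v) (hnorm : ∀ ω, ∑ i, v ω i ^ 2 = 1) (k i j : n) :
    fourthMoment μ v i j = if i = j then fourthMoment μ v k k else fourthMoment μ v k k / 3 := by
  split_ifs with hij
  · rw [hij, fourthMoment_self_eq hv hrot j k]
  · rw [fourthMoment_of_ne hv hrot hnorm hij, fourthMoment_self_eq hv hrot i k]

lemma integral_sq_weighted_sum_sq_eq_fourthMoment [IsFiniteMeasure μ] (hv : Measurable v)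
    (hrot : IsOrthogonallyInvariant μ v) (hnorm : ∀ ω, ∑ i, v ω i ^ 2 = 1) (c : n → ℝ) (k : n) :
    ∫ ω, (∑ i, c i * v ω i ^ 2) ^ 2 ∂μ
      = fourthMoment μ v k k / 3 * (∑ i, c i) ^ 2
        + (fourthMoment μ v k k - fourthMoment μ v k k / 3) * ∑ i, c i ^ 2 := by
  rw [integral_sq_weighted_sum_sq hv hnorm, ← sum_sum_mul_mul_ite c]
  refine Finset.sum_congr rfl fun i _ => Finset.sum_congr rfl fun j _ => ?_
  rw [fourthMoment_eq_ite hv hrot hnorm k i j]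

lemma fourthMoment_self [IsProbabilityMeasure μ] (hv : Measurable v)
    (hrot : IsOrthogonallyInvariant μ v)
    (hnorm : ∀ ω, ∑ i, v ω i ^ 2 = 1) (k : n) :
    fourthMoment μ v k k = 3 / (Fintype.card n * (Fintype.card n + 2)) := by
  have hone := integral_sq_weighted_sum_sq_eq_fourthMoment hv hrot hnorm 1 k
  simp only [Pi.one_apply, one_mul, hnorm, one_pow, integral_const, probReal_univ, smul_eq_mul,
    Finset.sum_const, Finset.card_univ, nsmul_eq_mul, mul_one] at hone
  have hcard : (0 : ℝ) < Fintype.card n := Nat.cast_pos.mpr (Fintype.card_pos_iff.mpr ⟨k⟩)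
  field_simp
  linear_combination (-3) * hone

lemma integral_sq_weighted_sum_sq_eq [IsProbabilityMeasure μ] [Nonempty n] (hv : Measurable v)
    (hrot : IsOrthogonallyInvariant μ v)
    (hnorm : ∀ ω, ∑ i, v ω i ^ 2 = 1) (c : n → ℝ) :
    ∫ ω, (∑ i, c i * v ω i ^ 2) ^ 2 ∂μ
      = 2 / (Fintype.card n * (Fintype.card n + 2)) * ∑ i, c i ^ 2
        + 1 / (Fintype.card n * (Fintype.card n + 2)) * (∑ i, c i) ^ 2 := by
  rw [integral_sq_weighted_sum_sq_eq_fourthMoment hv hrot hnorm c (Classical.arbitrary n),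
    fourthMoment_self hv hrot hnorm]
  ring

end FourthMoments

theorem sphere_quadratic_form_second_moment_general
    {Ω : Type*} [MeasurableSpace Ω] (μ : Measure Ω) [IsProbabilityMeasure μ]
    (n : ℕ) (hn : 0 < n)
    (Q : Matrix (Fin n) (Fin n) ℝ) (lam : Fin n → ℝ) (f : ℝ → ℝ)
    (hQ : Qᵀ * Q = 1)
    (fA : Matrix (Fin n) (Fin n) ℝ)
    (hfA : fA = Q * Matrix.diagonal (fun i => f (lam i)) * Qᵀ)
    (v : Ω → Fin n → ℝ) (hv : Measurable v)
    (hnorm : ∀ ω, ∑ i, (v ω i) ^ 2 = 1)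
    (hrot : ∀ R : Matrix (Fin n) (Fin n) ℝ, Rᵀ * R = 1 →
      Measure.map (fun ω => R.mulVec (v ω)) μ = Measure.map v μ) :
    ∫ ω, (v ω ⬝ᵥ fA.mulVec (v ω)) ^ 2 ∂μ =
      (2 / (n * (n + 2))) * ∑ i, f (lam i) ^ 2
        + (1 / (n * (n + 2))) * (∑ i, f (lam i)) ^ 2 := by
  have : Nonempty (Fin n) := ⟨⟨0, hn⟩⟩
  have hQt : (Qᵀ)ᵀ * Qᵀ = 1 := by rw [transpose_transpose, mul_eq_one_comm, hQ]
  calc ∫ ω, (v ω ⬝ᵥ fA *ᵥ v ω) ^ 2 ∂μ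
      = ∫ ω, (∑ i, f (lam i) * (Qᵀ *ᵥ v ω) i ^ 2) ^ 2 ∂μ := by
        simp only [hfA, dotProduct_mulVec_conj_diagonal]
    _ = ∫ ω, (∑ i, f (lam i) * v ω i ^ 2) ^ 2 ∂μ :=
        IsOrthogonallyInvariant.integral_comp_mulVec hrot hv hQt
          (g := fun x => (∑ i, f (lam i) * x i ^ 2) ^ 2) (by fun_prop)
    _ = _ := by
        simpa only [Fintype.card_fin] using integral_sq_weighted_sum_sq_eq hv hrot hnorm _

/-- Second moment of the quadratic form of a uniform unit vector: for `A = Q diag(λ) Qᵀ`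
symmetric, `f(A) = Q diag(f∘λ) Qᵀ`, and `v` uniform (rotation-invariant) on `S^{n-1}`,
`E[(vᵀ f(A) v)²] = (2/(n(n+2))) Σ f(λᵢ)² + (1/(n(n+2))) (Σ f(λᵢ))²`. -/
theorem sphere_quadratic_form_second_moment
    {Ω : Type*} [MeasurableSpace Ω] (μ : Measure Ω) [IsProbabilityMeasure μ]
    (n : ℕ) (hn : 0 < n)
    (A Q : Matrix (Fin n) (Fin n) ℝ) (lam : Fin n → ℝ) (f : ℝ → ℝ)
    (hQ : Qᵀ * Q = 1) (hA : A = Q * Matrix.diagonal lam * Qᵀ)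
    (fA : Matrix (Fin n) (Fin n) ℝ)
    (hfA : fA = Q * Matrix.diagonal (fun i => f (lam i)) * Qᵀ)
    (v : Ω → Fin n → ℝ) (hv : Measurable v)
    (hnorm : ∀ ω, ∑ i, (v ω i) ^ 2 = 1)
    (hrot : ∀ R : Matrix (Fin n) (Fin n) ℝ, Rᵀ * R = 1 →
      Measure.map (fun ω => R.mulVec (v ω)) μ = Measure.map v μ) :
    ∫ ω, (v ω ⬝ᵥ fA.mulVec (v ω)) ^ 2 ∂μ =
      (2 / (n * (n + 2))) * ∑ i, f (lam i) ^ 2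
        + (1 / (n * (n + 2))) * (∑ i, f (lam i)) ^ 2 :=
  sphere_quadratic_form_second_moment_general μ n hn Q lam f hQ fA hfA v hv hnorm hrot
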